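/- arXiv:2309.15270 — 2 statements merged into one kernel-verified Lean document; each statement's English description precedes it below -/
import Mathlib

section
/- Let q be a word satisfying condition C3 (whenever q = ℓ·R·u·R·r for a letter R and words ℓ, u, r, q is a factor of ℓ·R·u·R·u·R·r). Then every episode of q is left-repeating or right-repeating: if q = ℓ·R·u·R·r where R does not occur in u, then either ℓ is a suffix of (R·u)^{|ℓ|}, or r is a prefix of (u·R)^{|r|}. -/
/-!
By C3, `q = l·R·u·R·r` occurs in `l·R·u·R·u·R·r`, which is `|u| + 1` letters longer, at some
offset `|x|` with `0 ≤ |x| ≤ |u| + 1`. Offset `0` gives `r <+: u·R·r` and offset `|u| + 1` gives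
`l <:+ l·R·u`, and such self-overlaps propagate to the powers `(u·R)^k` and `(R·u)^k`.
Any other offset places the first marked `R` of `q` onto a letter of `u`, which is impossible
since `R ∉ u`.
-/

/-- k-fold concatenation of a word with itself. -/
def wpow {α : Type*} (w : List α) : ℕ → List α
  | 0 => []
  | k + 1 => w ++ wpow w k

/-- Condition C3: whenever `q = a·R·v·R·b`, `q` is a factor of `a·R·v·R·v·R·b`. -/
def CondC3 {α : Type*} (q : List α) : Prop :=
  ∀ (a v b : List α) (R : α), q = a ++ [R] ++ v ++ [R] ++ b →
    q <:+: a ++ [R] ++ v ++ [R] ++ v ++ [R] ++ b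

section Wpow

variable {α : Type*}

theorem length_wpow (w : List α) (n : ℕ) : (wpow w n).length = n * w.length := by
  induction n with
  | zero => simp [wpow]
  | succ n ih => simp only [wpow, List.length_append, ih, Nat.succ_mul, Nat.add_comm]

namespace List

theorem IsPrefix.prefix_wpow_append {w r : List α} (h : r <+: w ++ r) (n : ℕ) :
    r <+: wpow w n ++ r := by
  induction n with
  | zero => exact prefix_refl r
  | succ n ih =>
    rw [wpow, append_assoc]
    exact h.trans ((prefix_append_right_inj w).2 ih)

theorem IsSuffix.suffix_append_wpow {w l : List α} (h : l <:+ l ++ w) (n : ℕ) :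
    l <:+ l ++ wpow w n := by
  induction n with
  | zero => simp [wpow]
  | succ n ih =>
    obtain ⟨c, hc⟩ := h
    rw [wpow, ← append_assoc]
    exact ih.trans ⟨c, by rw [← append_assoc, hc]⟩

theorem IsPrefix.prefix_wpow_length {w r : List α} (h : r <+: w ++ r) (hw : w ≠ []) :
    r <+: wpow w r.length :=
  prefix_of_prefix_length_le (h.prefix_wpow_append _) (prefix_append _ r) <| by
    rw [length_wpow]
    exact Nat.le_mul_of_pos_right _ (length_pos_iff.2 hw)

theorem IsSuffix.suffix_wpow_length {w l : List α} (h : l <:+ l ++ w) (hw : w ≠ []) :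
    l <:+ wpow w l.length :=
  suffix_of_suffix_length_le (h.suffix_append_wpow _) (suffix_append l _) <| by
    rw [length_wpow]
    exact Nat.le_mul_of_pos_right _ (length_pos_iff.2 hw)

theorem mem_of_append_append_cons_eq {x l s u t : List α} {R : α}
    (h : x ++ l ++ R :: s = l ++ R :: (u ++ t)) (hx : x ≠ []) (hxu : x.length ≤ u.length) :
    R ∈ u := by
  have hR := congrArg (·[l.length + x.length]?) h
  simp only [append_assoc, le_add_iff_nonneg_left, zero_le, getElem?_append_right,
    add_tsub_cancel_right, length_append, length_cons, lt_add_iff_pos_right, Order.lt_add_one_iff,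
    getElem?_pos, Std.le_refl, getElem_append_right, tsub_self, getElem_cons_zero,
    le_add_iff_nonneg_right, add_tsub_cancel_left] at hR
  obtain ⟨k, hk⟩ := Nat.exists_eq_add_one_of_ne_zero (length_pos_iff.2 hx).ne'
  rw [hk, getElem?_cons_succ, getElem?_append_left (by omega)] at hR
  exact mem_of_getElem? hR.symm

end List

end Wpow

/-- Repeating lemma: in a word satisfying C3, every episode is left-repeating
or right-repeating. -/
theorem stmt_6 {α : Type*} (q : List α) (hC3 : CondC3 q)
    (l u r : List α) (R : α)
    (hq : q = l ++ [R] ++ u ++ [R] ++ r) (hep : R ∉ u) :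
    l <:+ wpow ([R] ++ u) l.length ∨ r <+: wpow (u ++ [R]) r.length := by
  obtain ⟨x, y, hxy⟩ := hC3 l u r R hq
  subst hq
  have hlen := congrArg List.length hxy
  simp only [List.length_append, List.length_cons, List.length_nil] at hlen
  rcases eq_or_ne x [] with rfl | hx
  · right
    refine List.IsPrefix.prefix_wpow_length ⟨y, ?_⟩ (by simp)
    simpa using hxy
  rcases eq_or_ne y [] with rfl | hy
  · left
    refine List.IsSuffix.suffix_wpow_length ⟨x, ?_⟩ (by simp)
    refine List.append_cancel_right (bs := [R] ++ u ++ [R] ++ r) ?_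
    simpa using hxy
  refine absurd (List.mem_of_append_append_cons_eq (l := l) (s := u ++ R :: (r ++ y))
    (t := R :: (u ++ R :: r)) ?_ hx ?_) hep
  · simpa using hxy
  · have hy_pos := List.length_pos_iff.2 hy
    omega
end

section
/- Let q be a word satisfying condition C3 and let q = ℓ·L·u·L·r be a decomposition where L·u·L is an episode (L does not occur in u) that is left-repeating, and suppose this is the right-most occurrence of a left-repeating episode in q. Then the word L·u is self-join-free (no letter occurs twice in L·u). -/
theorem wpow_succ' {α : Type*} (w : List α) (n : ℕ) :
    wpow w (n + 1) = wpow w n ++ w := by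
  induction n with
  | zero => simp [wpow]
  | succ n ih =>
    have ih' : w ++ wpow w n = wpow w n ++ w := ih
    calc wpow w (n + 1 + 1) = w ++ (w ++ wpow w n) := rfl
      _ = w ++ (wpow w n ++ w) := by rw [ih']
      _ = (w ++ wpow w n) ++ w := (List.append_assoc _ _ _).symm
      _ = wpow w (n + 1) ++ w := rfl

theorem wpow_length {α : Type*} (w : List α) (n : ℕ) :
    (wpow w n).length = n * w.length := by
  induction n with
  | zero => simp [wpow]
  | succ n ih => simp [wpow, ih]; ring

theorem wpow_add {α : Type*} (w : List α) (m n : ℕ) :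
    wpow w (m + n) = wpow w m ++ wpow w n := by
  induction m with
  | zero => simp [wpow]
  | succ m ih =>
    have : m + 1 + n = (m + n) + 1 := by ring
    rw [this]
    calc wpow w (m + n + 1) = w ++ wpow w (m + n) := rfl
      _ = w ++ (wpow w m ++ wpow w n) := by rw [ih]
      _ = (w ++ wpow w m) ++ wpow w n := (List.append_assoc _ _ _).symm
      _ = wpow w (m + 1) ++ wpow w n := rfl

theorem wpow_suffix_mono {α : Type*} (w : List α) {m n : ℕ} (h : m ≤ n) :
    wpow w m <:+ wpow w n := by
  obtain ⟨d, rfl⟩ := Nat.exists_eq_add_of_le h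
  have : wpow w (m + d) = wpow w d ++ wpow w m := by
    rw [Nat.add_comm m d, wpow_add]
  exact ⟨wpow w d, this.symm⟩

theorem suffix_of_suffix_append {α : Type*} {s t u : List α}
    (h : s <:+ t ++ u) (hlen : s.length ≤ u.length) : s <:+ u := by
  obtain ⟨c, hc⟩ := h
  have hlc : t.length ≤ c.length := by
    have := congrArg List.length hc
    simp at this; omega
  refine ⟨c.drop t.length, ?_⟩
  have := congrArg (List.drop t.length) hc
  rwa [List.drop_append, Nat.sub_eq_zero_of_le hlc, List.drop_zero,
    List.drop_left] at this

/-- From `x ++ z = z ++ w` with `|x| = |w|`, `z` is a suffix of a power of `w`. -/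
theorem lemA {α : Type*} (w : List α) (hw : w ≠ []) :
    ∀ n (z x : List α), z.length ≤ n → x ++ z = z ++ w → x.length = w.length →
      ∃ m, z <:+ wpow w (m + 1) := by
  have hw0 : 0 < w.length := List.length_pos_iff.mpr hw
  intro n
  induction n with
  | zero =>
    intro z x hz _ _
    have : z = [] := List.length_eq_zero_iff.mp (Nat.le_zero.mp hz)
    exact ⟨0, by simp [this]⟩
  | succ n ih =>
    intro z x hz heq hlen
    by_cases hzw : z.length ≤ w.length
    · -- z is a suffix of w
      refine ⟨0, ?_⟩
      have h1 := congrArg (List.drop z.length) heq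
      rw [List.drop_append, Nat.sub_eq_zero_of_le (by omega),
        List.drop_zero, List.drop_left] at h1
      have hz : z <:+ w := ⟨x.drop z.length, h1⟩
      have : wpow w (0 + 1) = w := by simp [wpow]
      rw [this]
      exact hz
    · push_neg at hzw
      -- x is a prefix of z
      have h1 := congrArg (List.take x.length) heq
      rw [List.take_left, List.take_append,
        Nat.sub_eq_zero_of_le (by omega), List.take_zero, List.append_nil] at h1
      -- h1 : x = z.take x.length
      have hx : x ++ z.drop x.length = z := by
        have h2 := List.take_append_drop x.length z
        rwa [← h1] at h2
      set z₁ := z.drop x.length with hz₁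
      have heq1 : x ++ z₁ = z₁ ++ w := by
        apply List.append_cancel_left (as := x)
        calc x ++ (x ++ z₁) = x ++ z := by rw [hx]
          _ = z ++ w := heq
          _ = (x ++ z₁) ++ w := by rw [hx]
          _ = x ++ (z₁ ++ w) := List.append_assoc _ _ _
      have hlen1 : z₁.length ≤ n := by
        have : z₁.length = z.length - x.length := by simp [hz₁]
        omega
      obtain ⟨m, hm⟩ := ih z₁ x hlen1 heq1 hlen
      refine ⟨m + 1, ?_⟩
      have hzeq : z = z₁ ++ w := by rw [← heq1, hx]
      rw [hzeq, wpow_succ']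
      obtain ⟨c, hc⟩ := hm
      exact ⟨c, by rw [← List.append_assoc, hc]⟩

theorem suffix_wpow_length {α : Type*} (w : List α) (hw : w ≠ []) (a : List α) (m : ℕ)
    (h : a <:+ wpow w m) : a <:+ wpow w a.length := by
  have hw0 : 0 < w.length := List.length_pos_iff.mpr hw
  by_cases hm : m ≤ a.length
  · exact h.trans (wpow_suffix_mono w hm)
  · push_neg at hm
    have hsplit : wpow w m = wpow w (m - a.length) ++ wpow w a.length := by
      rw [← wpow_add]; congr 1; omega
    rw [hsplit] at h
    exact suffix_of_suffix_append h
      (by rw [wpow_length]; exact Nat.le_mul_of_pos_right _ hw0)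

/-- If `b` is a prefix of `w ++ b` with `w` nonempty, all letters of `b` lie in `w`. -/
theorem lemC {α : Type*} :
    ∀ (n : ℕ) (b w : List α), b.length ≤ n → w ≠ [] → b <+: w ++ b →
      ∀ c ∈ b, c ∈ w := by
  intro n
  induction n with
  | zero =>
    intro b w hb _ _ c hc
    rw [List.length_eq_zero_iff.mp (Nat.le_zero.mp hb)] at hc
    simp at hc
  | succ n ih =>
    intro b w hb hw hpre c hc
    have hw0 : 0 < w.length := List.length_pos_iff.mpr hw
    obtain ⟨s, hs⟩ := hpre
    have h1 := congrArg (List.take b.length) hs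
    rw [List.take_left, List.take_append] at h1
    by_cases hbw : b.length ≤ w.length
    · rw [Nat.sub_eq_zero_of_le hbw, List.take_zero, List.append_nil] at h1
      rw [h1] at hc
      exact List.take_subset _ _ hc
    · push_neg at hbw
      rw [List.take_of_length_le (le_of_lt hbw)] at h1
      -- h1 : b = w ++ b.take (b.length - w.length)
      set t := b.take (b.length - w.length) with ht
      have htlen : t.length ≤ n := by
        have : t.length = min (b.length - w.length) b.length := by simp [ht]
        omega
      have htpre : t <+: w ++ t := by rw [← h1]; exact List.take_prefix _ _
      rw [h1] at hc
      rcases List.mem_append.mp hc with h | h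
      · exact h
      · exact ih t w htlen hw htpre c h

theorem first_split {α : Type*} {x : α} :
    ∀ {l : List α}, x ∈ l → ∃ s t, l = s ++ [x] ++ t ∧ x ∉ s := by
  intro l
  induction l with
  | nil => intro h; simp at h
  | cons c l' ih =>
    intro h
    by_cases hcx : c = x
    · exact ⟨[], l', by simp [hcx], by simp⟩
    · have hmem : x ∈ l' := by
        rcases List.mem_cons.mp h with h' | h'
        · exact absurd h'.symm hcx
        · exact h'
      obtain ⟨s, t, hst, hxs⟩ := ih hmem
      refine ⟨c :: s, t, by simp [hst], ?_⟩
      intro hm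
      rcases List.mem_cons.mp hm with h' | h'
      · exact hcx h'.symm
      · exact hxs h'

theorem not_nodup_split {α : Type*} :
    ∀ (l : List α), ¬ l.Nodup → ∃ s x t v, l = s ++ [x] ++ t ++ [x] ++ v ∧ x ∉ t := by
  intro l
  induction l with
  | nil => intro h; exact absurd List.nodup_nil h
  | cons c l' ih =>
    intro h
    by_cases hc : c ∈ l'
    · obtain ⟨t, v, htv, hct⟩ := first_split hc
      exact ⟨[], c, t, v, by simp [htv], hct⟩
    · have : ¬ l'.Nodup := fun hn => h (List.nodup_cons.mpr ⟨hc, hn⟩)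
      obtain ⟨s, x, t, v, hst, hxt⟩ := ih this
      exact ⟨c :: s, x, t, v, by simp [hst], hxt⟩

/-- If `L·u·L` is the right-most occurrence of a left-repeating episode
in a word `q` satisfying C3, then `L·u` is self-join-free. -/
theorem stmt_7 {α : Type*} (q : List α) (hC3 : CondC3 q)
    (l u r : List α) (L : α)
    (hq : q = l ++ [L] ++ u ++ [L] ++ r)
    (hep : L ∉ u)
    (hleft : l <:+ wpow ([L] ++ u) l.length)
    (hrightmost : ∀ (l' u' r' : List α) (R' : α),
      q = l' ++ [R'] ++ u' ++ [R'] ++ r' → R' ∉ u' →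
      l' <:+ wpow ([R'] ++ u') l'.length → l'.length ≤ l.length) :
    ([L] ++ u).Nodup := by
  by_contra hnd
  obtain ⟨s, R, t, v, hsp, hRt⟩ := not_nodup_split _ hnd
  cases s with
  | nil =>
    simp only [List.nil_append, List.cons_append, List.append_assoc,
      List.singleton_append, List.cons.injEq] at hsp
    obtain ⟨hLR, hu⟩ := hsp
    exact hep (by rw [hu, hLR]; simp)
  | cons c u1 =>
    simp only [List.nil_append, List.cons_append, List.append_assoc,
      List.singleton_append, List.cons.injEq] at hsp
    obtain ⟨hLc, hu⟩ := hsp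
    have hRu : R ∈ u := by rw [hu]; simp
    have hLR : L ≠ R := fun h => hep (h ▸ hRu)
    set a : List α := l ++ [L] ++ u1 with ha
    set b : List α := v ++ [L] ++ r with hb
    have hq' : q = a ++ [R] ++ t ++ [R] ++ b := by
      rw [hq, hu, ha, hb]; simp [List.append_assoc]
    obtain ⟨x, y, hW⟩ := hC3 a t b R hq'
    -- hW : x ++ q ++ y = a ++ [R] ++ t ++ [R] ++ t ++ [R] ++ b
    have hlen : x.length + y.length = t.length + 1 := by
      have := congrArg List.length hW
      rw [hq'] at this
      simp at this
      omega
    by_cases hy : y = []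
    · -- rightmost-offset contradiction
      subst hy
      have hxlen : x.length = t.length + 1 := by simpa using hlen
      have heq : x ++ (a ++ [R] ++ t) ++ ([R] ++ b) =
          (a ++ [R] ++ t) ++ ([R] ++ t) ++ ([R] ++ b) := by
        have h := hW
        rw [hq'] at h
        simpa [List.append_assoc] using h
      have heq2 : x ++ (a ++ [R] ++ t) = (a ++ [R] ++ t) ++ ([R] ++ t) :=
        List.append_cancel_right heq
      obtain ⟨m, hm⟩ := lemA ([R] ++ t) (by simp) (a ++ [R] ++ t).length
        (a ++ [R] ++ t) x (le_refl _) heq2 (by simp; omega)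
      have hm' : a <:+ wpow ([R] ++ t) m := by
        rw [wpow_succ'] at hm
        obtain ⟨c', hc'⟩ := hm
        have : (c' ++ a) ++ ([R] ++ t) = wpow ([R] ++ t) m ++ ([R] ++ t) := by
          rw [← hc']; simp [List.append_assoc]
        exact ⟨c', List.append_cancel_right this⟩
      have hsuf : a <:+ wpow ([R] ++ t) a.length :=
        suffix_wpow_length _ (by simp) a m hm'
      have hle := hrightmost a t b R hq' hRt hsuf
      have halen : a.length = l.length + 1 + u1.length := by simp [ha]; omega
      omega
    · -- the episode would repeat to the right, forcing L into u
      have hy0 : 0 < y.length := List.length_pos_iff.mpr hy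
      have hxt : x.length ≤ t.length := by omega
      set a' : List α := a ++ [R] ++ t ++ [R] with ha'
      have hWs : (x ++ a') ++ (b ++ y) = a' ++ ((t ++ [R]) ++ b) := by
        rw [hq'] at hW
        simpa [List.append_assoc] using hW
      have hdrop := congrArg (List.drop (x ++ a').length) hWs
      rw [List.drop_left, List.drop_append,
        List.drop_eq_nil_of_le (by simp), List.nil_append,
        List.drop_append] at hdrop
      have e1 : (x ++ a').length - a'.length = x.length := by simp
      have e2 : x.length - (t ++ [R]).length = 0 := by simp; omega
      rw [e1, e2, List.drop_zero] at hdrop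
      -- hdrop : b ++ y = (t ++ [R]).drop x.length ++ b
      set w' : List α := (t ++ [R]).drop x.length with hw'
      have hw'ne : w' ≠ [] := by
        have hl' : w'.length = t.length + 1 - x.length := by simp [hw']
        intro h
        rw [h] at hl'
        simp at hl'
        omega
      have hbpre : b <+: w' ++ b := ⟨y, hdrop⟩
      have hLb : L ∈ b := by rw [hb]; simp
      have hLw' : L ∈ w' := lemC b.length b w' (le_refl _) hw'ne hbpre L hLb
      have hLtR : L ∈ t ++ [R] := List.drop_subset _ _ hLw'
      rcases List.mem_append.mp hLtR with h | h
      · exact hep (by rw [hu]; simp [h])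
      · exact hLR (by simpa using h)
end
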